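/- Let W : [0,1]² → [-1,1] be a bounded measurable kernel and T_W : L²([0,1]) → L²([0,1]) the integral operator (T_W f)(x) = ∫ W(x,y) f(y) dy. Then the operator norm of T_W satisfies ‖T_W‖ ≤ √(‖W‖₁), where ‖W‖₁ = ∫∫ |W(x,y)| dx dy. -/

import Mathlib

/-!
Cauchy–Schwarz in `y` gives `|T_W f (x)|² ≤ (∫ W(x,y)² dy) ‖f‖₂²`, and `W² ≤ |W|` because
`|W| ≤ 1`; integrating in `x` yields `‖T_W f‖₂² ≤ ‖W‖₁ ‖f‖₂²`.
-/

open MeasureTheory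
open scoped ENNReal

variable {α β E : Type*} [MeasurableSpace α] [MeasurableSpace β] [NormedAddCommGroup E]

lemma eLpNorm_two_eq_lintegral_sq {ν : Measure β} (f : β → E) :
    eLpNorm f 2 ν = (∫⁻ y, ‖f y‖ₑ ^ (2 : ℝ) ∂ν) ^ (1 / 2 : ℝ) := by
  rw [eLpNorm_eq_lintegral_rpow_enorm_toReal (by norm_num) (by norm_num)]
  norm_num

lemma enorm_integral_mul_le_of_abs_le_one {ν : Measure β} {k f : β → ℝ}
    (hk : AEMeasurable k ν) (hk1 : ∀ y, |k y| ≤ 1) (hf : AEMeasurable f ν) :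
    ‖∫ y, k y * f y ∂ν‖ₑ ≤ (∫⁻ y, ‖k y‖ₑ ∂ν) ^ (1 / 2 : ℝ) * eLpNorm f 2 ν := by
  have hk_sq_le : ∀ y, ‖k y‖ₑ ^ (2 : ℝ) ≤ ‖k y‖ₑ := fun y => by
    have : ‖k y‖ₑ ≤ 1 := by simpa [Real.enorm_eq_ofReal_abs] using hk1 y
    simpa using ENNReal.rpow_le_rpow_of_exponent_ge this (one_le_two : (1 : ℝ) ≤ 2)
  calc ‖∫ y, k y * f y ∂ν‖ₑ
      ≤ ∫⁻ y, ‖k y‖ₑ * ‖f y‖ₑ ∂ν := by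
        simpa only [enorm_mul] using enorm_integral_le_lintegral_enorm (fun y => k y * f y)
    _ ≤ (∫⁻ y, ‖k y‖ₑ ^ (2 : ℝ) ∂ν) ^ (1 / 2 : ℝ) * (∫⁻ y, ‖f y‖ₑ ^ (2 : ℝ) ∂ν) ^ (1 / 2 : ℝ) :=
        ENNReal.lintegral_mul_le_Lp_mul_Lq ν .two_two hk.enorm hf.enorm
    _ ≤ (∫⁻ y, ‖k y‖ₑ ∂ν) ^ (1 / 2 : ℝ) * eLpNorm f 2 ν := by
        rw [eLpNorm_two_eq_lintegral_sq]
        gcongr with y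
        exact hk_sq_le y

lemma eLpNorm_two_le_of_enorm_le_sqrt_mul {μ : Measure α} {g : α → E} {h : α → ℝ≥0∞}
    (hh : AEMeasurable h μ) (C : ℝ≥0∞) (hg : ∀ x, ‖g x‖ₑ ≤ h x ^ (1 / 2 : ℝ) * C) :
    eLpNorm g 2 μ ≤ (∫⁻ x, h x ∂μ) ^ (1 / 2 : ℝ) * C := by
  have hsq : ∀ x, (h x ^ (1 / 2 : ℝ) * C) ^ (2 : ℝ) = h x * C ^ (2 : ℝ) := fun x => by
    rw [ENNReal.mul_rpow_of_nonneg _ _ (by norm_num), ← ENNReal.rpow_mul]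
    norm_num
  calc eLpNorm g 2 μ
      ≤ (∫⁻ x, (h x ^ (1 / 2 : ℝ) * C) ^ (2 : ℝ) ∂μ) ^ (1 / 2 : ℝ) := by
        rw [eLpNorm_two_eq_lintegral_sq]
        gcongr with x
        exact hg x
    _ = (∫⁻ x, h x ∂μ) ^ (1 / 2 : ℝ) * C := by
        simp_rw [hsq]
        rw [lintegral_mul_const'' _ hh, ENNReal.mul_rpow_of_nonneg _ _ (by norm_num),
          ← ENNReal.rpow_mul]
        norm_num

lemma eLpNorm_integral_kernel_mul_le {μ : Measure α} {ν : Measure β} [SFinite ν]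
    {K : α × β → ℝ} (hK : Measurable K) (hK1 : ∀ p, |K p| ≤ 1) {f : β → ℝ}
    (hf : AEMeasurable f ν) :
    eLpNorm (fun x => ∫ y, K (x, y) * f y ∂ν) 2 μ ≤
      (∫⁻ x, ∫⁻ y, ‖K (x, y)‖ₑ ∂ν ∂μ) ^ (1 / 2 : ℝ) * eLpNorm f 2 ν :=
  eLpNorm_two_le_of_enorm_le_sqrt_mul (hK.enorm.lintegral_prod_right').aemeasurable _
    fun x => enorm_integral_mul_le_of_abs_le_one
      (hK.comp measurable_prodMk_left).aemeasurable (fun y => hK1 (x, y)) hf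

lemma lintegral_lintegral_ofReal_eq_ofReal_integral_integral {μ : Measure α} {ν : Measure β}
    [SFinite μ] [SFinite ν] {F : α × β → ℝ} (hF : Integrable F (μ.prod ν)) (hF0 : 0 ≤ F) :
    ∫⁻ x, ∫⁻ y, ENNReal.ofReal (F (x, y)) ∂ν ∂μ = ENNReal.ofReal (∫ x, ∫ y, F (x, y) ∂ν ∂μ) := by
  rw [← integral_prod F hF, ofReal_integral_eq_lintegral_ofReal hF (.of_forall hF0),
    lintegral_prod _ hF.aemeasurable.ennreal_ofReal]

/-- The operator norm of the integral operator `T_W` is at most `√‖W‖₁`: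
for every `f ∈ L²`, `‖T_W f‖₂ ≤ √‖W‖₁ · ‖f‖₂`. -/
theorem stmt2
    (W : ℝ × ℝ → ℝ) (hWmeas : Measurable W)
    (hWrange : ∀ p : ℝ × ℝ, W p ∈ Set.Icc (-1 : ℝ) 1) :
    ∀ f : ℝ → ℝ, MemLp f 2 (volume.restrict (Set.Icc (0 : ℝ) 1)) →
      eLpNorm (fun x => ∫ y in Set.Icc (0 : ℝ) 1, W (x, y) * f y) 2
          (volume.restrict (Set.Icc (0 : ℝ) 1)) ≤
        ENNReal.ofReal
            (Real.sqrt (∫ x in Set.Icc (0 : ℝ) 1, ∫ y in Set.Icc (0 : ℝ) 1, |W (x, y)|)) *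
          eLpNorm f 2 (volume.restrict (Set.Icc (0 : ℝ) 1)) := by
  intro f hf
  set μ := volume.restrict (Set.Icc (0 : ℝ) 1)
  have hW1 : ∀ p, |W p| ≤ 1 := fun p => abs_le.mpr (hWrange p)
  have hWint : Integrable (fun p => |W p|) (μ.prod μ) :=
    .of_bound hWmeas.abs.aestronglyMeasurable 1 (.of_forall fun p => by simpa using hW1 p)
  calc _ ≤ (∫⁻ x, ∫⁻ y, ‖W (x, y)‖ₑ ∂μ ∂μ) ^ (1 / 2 : ℝ) * eLpNorm f 2 μ :=
        eLpNorm_integral_kernel_mul_le hWmeas hW1 hf.aemeasurable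
    _ = _ := by
        simp_rw [Real.enorm_eq_ofReal_abs]
        rw [lintegral_lintegral_ofReal_eq_ofReal_integral_integral hWint fun p => abs_nonneg _,
          ENNReal.ofReal_rpow_of_nonneg (by positivity) (by norm_num), Real.sqrt_eq_rpow]
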